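/- The derivative of θ at z = 0 is given by θ'(0, τ) = 2π q^{1/8} ∏_{n=1}^∞ (1−q^n)^3, where the derivative is taken in the z variable. -/

import Mathlib

open Complex Real

/-- Jacobi's theta function
`θ(z, τ) = 2 q^{1/8} sin(πz) ∏_{n=1}^∞ (1−q^n)(1−q^n y)(1−q^n y⁻¹)`
with `q = e^{2πiτ}`, `y = e^{2πiz}`. -/
noncomputable def jacobiTheta' (z τ : ℂ) : ℂ :=
  2 * Complex.exp (Real.pi * Complex.I * τ / 4) * Complex.sin (Real.pi * z) *
    ∏' n : ℕ,
      ((1 - Complex.exp (2 * Real.pi * Complex.I * τ) ^ (n + 1)) *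
        (1 - Complex.exp (2 * Real.pi * Complex.I * τ) ^ (n + 1) *
            Complex.exp (2 * Real.pi * Complex.I * z)) *
        (1 - Complex.exp (2 * Real.pi * Complex.I * τ) ^ (n + 1) *
            (Complex.exp (2 * Real.pi * Complex.I * z))⁻¹))

/-! Since `sin (π z)` vanishes at `z = 0` with derivative `π`, the product rule gives
`θ'(0) = 2 q^{1/8} π P(1)` for `P(y) = ∏ (1 - qⁿ)(1 - qⁿ y)(1 - qⁿ y⁻¹)`, as soon as `P` is
holomorphic near `y = 1`. It is holomorphic on all of `ℂ \ {0}`: where `‖y‖, ‖y⁻¹‖ ≤ R`, the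
`n`-th factor is `1 + O(R ‖q‖ⁿ)`, so the product converges locally uniformly there. At `y = 1`
every factor is `(1 - qⁿ)³`. -/

open Filter

lemma norm_one_sub_mul_one_sub_mul_one_sub_sub_one_le {R : Type*} [NormedRing R] [NormOneClass R]
    {a b c : R} {t : ℝ} (ha : ‖a‖ ≤ t) (hb : ‖b‖ ≤ t) (hc : ‖c‖ ≤ t) (ht : t ≤ 1) :
    ‖(1 - a) * (1 - b) * (1 - c) - 1‖ ≤ 7 * t := by
  have ha' : ‖1 - a‖ ≤ 2 := (norm_sub_le _ _).trans (by rw [norm_one]; linarith)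
  have hb' : ‖1 - b‖ ≤ 2 := (norm_sub_le _ _).trans (by rw [norm_one]; linarith)
  calc ‖(1 - a) * (1 - b) * (1 - c) - 1‖ = ‖-a - (1 - a) * b - (1 - a) * (1 - b) * c‖ := by
        congr 1; noncomm_ring
    _ ≤ ‖a‖ + ‖1 - a‖ * ‖b‖ + ‖1 - a‖ * ‖1 - b‖ * ‖c‖ := by
        grw [norm_sub_le, norm_sub_le, norm_neg, norm_mul_le, norm_mul_le, norm_mul_le]
    _ ≤ t + 2 * t + 2 * 2 * t := by gcongr
    _ = 7 * t := by ring

noncomputable def thetaFactor (q : ℂ) (n : ℕ) (y : ℂ) : ℂ :=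
  (1 - q ^ (n + 1)) * (1 - q ^ (n + 1) * y) * (1 - q ^ (n + 1) * y⁻¹)

lemma jacobiTheta'_eq_tprod_thetaFactor (z τ : ℂ) :
    jacobiTheta' z τ = 2 * cexp (π * I * τ / 4) * Complex.sin (π * z) *
      ∏' n, thetaFactor (cexp (2 * π * I * τ)) n (cexp (2 * π * I * z)) :=
  rfl

lemma thetaFactor_one (q : ℂ) (n : ℕ) : thetaFactor q n 1 = (1 - q ^ (n + 1)) ^ 3 := by
  simp only [thetaFactor, mul_one, inv_one]
  ring

lemma differentiableOn_thetaFactor (q : ℂ) (n : ℕ) : DifferentiableOn ℂ (thetaFactor q n) {0}ᶜ := by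
  unfold thetaFactor
  fun_prop (disch := assumption)

lemma norm_thetaFactor_sub_one_le {q y : ℂ} {R : ℝ} {n : ℕ} (hR : 1 ≤ R) (hy : ‖y‖ ≤ R)
    (hy' : ‖y⁻¹‖ ≤ R) (hn : R * ‖q‖ ^ (n + 1) ≤ 1) :
    ‖thetaFactor q n y - 1‖ ≤ 7 * (R * ‖q‖ ^ (n + 1)) := by
  have hq : ‖q ^ (n + 1)‖ ≤ R * ‖q‖ ^ (n + 1) := by
    rw [norm_pow]; exact le_mul_of_one_le_left (by positivity) hR
  refine norm_one_sub_mul_one_sub_mul_one_sub_sub_one_le hq ?_ ?_ hn <;>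
  · rw [norm_mul, norm_pow, mul_comm]; gcongr

lemma hasProdUniformlyOn_thetaFactor {q : ℂ} (hq : ‖q‖ < 1) {K : Set ℂ} (hK : IsCompact K)
    (hK0 : K ⊆ {0}ᶜ) :
    HasProdUniformlyOn (thetaFactor q) (fun y ↦ ∏' n, thetaFactor q n y) K := by
  obtain ⟨C, hC⟩ := hK.exists_bound_of_continuousOn continuousOn_id
  obtain ⟨C', hC'⟩ := hK.exists_bound_of_continuousOn (continuousOn_inv₀.mono hK0)
  set R := max (max C C') 1
  have hsmall : ∀ᶠ n in atTop, R * ‖q‖ ^ (n + 1) < 1 := by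
    have : Tendsto (fun n ↦ R * ‖q‖ ^ (n + 1)) atTop (nhds 0) := by
      simpa using ((tendsto_pow_atTop_nhds_zero_of_lt_one (norm_nonneg q) hq).comp
        (tendsto_add_atTop_nat 1)).const_mul R
    exact this.eventually (gt_mem_nhds one_pos)
  have hbound : ∀ᶠ n in atTop, ∀ y ∈ K, ‖thetaFactor q n y - 1‖ ≤ 7 * (R * ‖q‖ ^ (n + 1)) := by
    filter_upwards [hsmall] with n hn y hy
    exact norm_thetaFactor_sub_one_le (le_max_right _ _)
      ((hC y hy).trans ((le_max_left _ _).trans (le_max_left _ _)))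
      ((hC' y hy).trans ((le_max_right _ _).trans (le_max_left _ _))) hn.le
  have hsum : Summable fun n ↦ 7 * (R * ‖q‖ ^ (n + 1)) :=
    (((summable_nat_add_iff 1).mpr
      (summable_geometric_of_lt_one (norm_nonneg q) hq)).mul_left R).mul_left 7
  simpa using Summable.hasProdUniformlyOn_nat_one_add hK hsum hbound
    fun n ↦ ((differentiableOn_thetaFactor q n).mono hK0).continuousOn.sub continuousOn_const

lemma differentiableOn_tprod_thetaFactor {q : ℂ} (hq : ‖q‖ < 1) :
    DifferentiableOn ℂ (fun y ↦ ∏' n, thetaFactor q n y) {0}ᶜ := by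
  have hprod : HasProdLocallyUniformlyOn (thetaFactor q) (fun y ↦ ∏' n, thetaFactor q n y) {0}ᶜ :=
    hasProdLocallyUniformlyOn_of_forall_compact isOpen_compl_singleton
      fun _ hK0 hK ↦ hasProdUniformlyOn_thetaFactor hq hK hK0
  exact hprod.differentiableOn (.of_forall fun s ↦ by
    simpa [Finset.prod_fn] using
      DifferentiableOn.finsetProd fun n _ ↦ differentiableOn_thetaFactor q n) isOpen_compl_singleton

/-- `θ'(0, τ) = 2π q^{1/8} ∏_{n=1}^∞ (1−q^n)^3`, the derivative taken in the `z`
variable. -/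
theorem jacobiTheta'_deriv_zero (τ : ℂ) (hτ : 0 < τ.im) :
    HasDerivAt (fun z => jacobiTheta' z τ)
      (2 * Real.pi * Complex.exp (Real.pi * Complex.I * τ / 4) *
        ∏' n : ℕ, (1 - Complex.exp (2 * Real.pi * Complex.I * τ) ^ (n + 1)) ^ 3)
      0 := by
  set q := cexp (2 * π * I * τ)
  have hq : ‖q‖ < 1 := UpperHalfPlane.norm_exp_two_pi_I_lt_one ⟨τ, hτ⟩
  have hsin : HasDerivAt (fun z : ℂ ↦ Complex.sin (π * z)) π 0 := by
    simpa using ((hasDerivAt_id (0 : ℂ)).const_mul (π : ℂ)).csin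
  have hprod : DifferentiableAt ℂ (fun z ↦ ∏' n, thetaFactor q n (cexp (2 * π * I * z))) 0 :=
    DifferentiableAt.fun_comp' (0 : ℂ)
      ((differentiableOn_tprod_thetaFactor hq).differentiableAt
        (isOpen_compl_singleton.mem_nhds (exp_ne_zero (2 * π * I * 0)))) (by fun_prop)
  simp_rw [jacobiTheta'_eq_tprod_thetaFactor]
  refine ((hsin.const_mul _).fun_mul hprod.hasDerivAt).congr_deriv ?_
  simp only [mul_zero, Complex.exp_zero, Complex.sin_zero, thetaFactor_one, zero_mul, add_zero]
  ring
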